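/- Let X be an n-dimensional polyhedral real normed space and Y ⊆ X a k-dimensional subspace, 1 ≤ k ≤ n−1. Then there exists a minimal projection P ∈ P_min(X,Y) having at least n norming pairs (x,f) ∈ ext B_X × ext B_{X*} with f(P(x)) = ‖P‖. -/

import Mathlib

open Metric Module

noncomputable section

variable {X : Type*} [NormedAddCommGroup X] [NormedSpace ℝ X]

def IsProjOnto (Y : Submodule ℝ X) (P : X →L[ℝ] X) : Prop :=
  (∀ x, P x ∈ Y) ∧ ∀ y ∈ Y, P y = y

def relProjConst (Y : Submodule ℝ X) : ℝ :=
  sInf {c | ∃ P : X →L[ℝ] X, IsProjOnto Y P ∧ ‖P‖ = c}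

def MinProjSet (Y : Submodule ℝ X) : Set (X →L[ℝ] X) :=
  {P | IsProjOnto Y P ∧ ‖P‖ = relProjConst Y}

def IsPolyhedralSpace (X : Type*) [NormedAddCommGroup X] [NormedSpace ℝ X] : Prop :=
  ∃ s : Finset X, closedBall (0 : X) 1 = convexHull ℝ (s : Set X)

/-!
Take `P` an extreme point of the compact set of minimal projections. Since `B_X` and `B_{X*}`
have finitely many extreme points, near `P` the norm on `X →L[ℝ] X` is the maximum of the
linear functionals `Q ↦ f (Q x)` over the norming pairs `(x, f)` of `P`. The admissible
directions `L` (range in `Y`, vanishing on `Y`) form a space of dimension `(n - k) k`. If some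
`(L, τ) ≠ 0` had `f (L x) = τ` on every norming pair, then `‖P ± ε L‖ ≤ ‖P‖ ± ε τ` for small `ε`,
so `τ = 0` by minimality and `P ± ε L` would both be minimal, contradicting extremality. Hence
the map `(L, τ) ↦ (f (L x) - τ)_{(x, f)}` is injective, and there are at least
`(n - k) k + 1 ≥ n` norming pairs.
-/

open Set Filter Topology

lemma Finset.exists_pos_forall_add_mul_le_and_sub_mul_le {ι : Type*} (s : Finset ι)
    (a b : ι → ℝ) {c : ℝ} (hle : ∀ i ∈ s, a i ≤ c) (htight : ∀ i ∈ s, a i = c → b i = 0) :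
    ∃ ε > 0, ∀ i ∈ s, a i + ε * b i ≤ c ∧ a i - ε * b i ≤ c := by
  have hnear : ∀ᶠ t in 𝓝 (0 : ℝ), ∀ i ∈ s, a i + t * b i ≤ c := by
    refine (eventually_all_finset s).2 fun i hi => ?_
    rcases (hle i hi).lt_or_eq with hlt | heq
    · have hcont : Tendsto (fun t : ℝ => a i + t * b i) (𝓝 0) (𝓝 (a i)) := by
        simpa using ((by fun_prop : Continuous fun t : ℝ => a i + t * b i).tendsto 0)
      exact (hcont.eventually (gt_mem_nhds hlt)).mono fun _ => le_of_lt
    · exact Eventually.of_forall fun t => by simp [htight i hi heq, heq]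
  have hneg : ∀ᶠ t in 𝓝 (0 : ℝ), ∀ i ∈ s, a i + -t * b i ≤ c :=
    (continuous_neg.tendsto' 0 0 neg_zero).eventually hnear
  obtain ⟨ε, ⟨hplus, hminus⟩, hε⟩ :=
    (((hnear.and hneg).filter_mono nhdsWithin_le_nhds).and self_mem_nhdsWithin :
      ∀ᶠ t in 𝓝[>] (0 : ℝ), _).exists
  exact ⟨ε, hε, fun i hi => ⟨hplus i hi, by simpa [sub_eq_add_neg] using hminus i hi⟩⟩

lemma eq_zero_of_add_mem_of_sub_mem {𝕜 E : Type*} [Field 𝕜] [LinearOrder 𝕜]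
    [IsStrictOrderedRing 𝕜] [AddCommGroup E] [Module 𝕜 E] {A : Set E} {x v : E}
    (hx : x ∈ A.extremePoints 𝕜) (hplus : x + v ∈ A) (hminus : x - v ∈ A) : v = 0 := by
  have hmid : x ∈ openSegment 𝕜 (x + v) (x - v) :=
    ⟨1 / 2, 1 / 2, by norm_num, by norm_num, by norm_num, by module⟩
  simpa using hx.2 hplus hminus hmid

section NormedSpace

variable {E F : Type*} [NormedAddCommGroup E] [NormedSpace ℝ E]
  [NormedAddCommGroup F] [NormedSpace ℝ F]

lemma IsCompact.exists_mem_extremePoints_isMaxOn {C : Set E} (hC : IsCompact C)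
    (hne : C.Nonempty) (g : E →L[ℝ] ℝ) : ∃ x ∈ C.extremePoints ℝ, IsMaxOn g C x := by
  obtain ⟨x₀, hx₀C, hx₀⟩ := hC.exists_isMaxOn hne g.continuous.continuousOn
  have hexp : IsExposed ℝ C (g.toExposed C) := ContinuousLinearMap.toExposed.isExposed
  obtain ⟨x, hx⟩ := (hexp.isCompact hC).extremePoints_nonempty ⟨x₀, hx₀C, fun y hy => hx₀ hy⟩
  exact ⟨x, hexp.isExtreme.extremePoints_subset_extremePoints hx, (extremePoints_subset hx).2⟩

lemma ContinuousLinearMap.apply_le_opNorm_of_norm_le_one (g : E →L[ℝ] ℝ) {x : E}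
    (hx : ‖x‖ ≤ 1) : g x ≤ ‖g‖ :=
  (le_abs_self _).trans <| by simpa using g.le_of_opNorm_le_of_le le_rfl hx

lemma ContinuousLinearMap.apply_apply_le_opNorm (Q : E →L[ℝ] F) {x : E} (hx : ‖x‖ ≤ 1)
    {f : F →L[ℝ] ℝ} (hf : ‖f‖ ≤ 1) : f (Q x) ≤ ‖Q‖ :=
  (le_abs_self _).trans <| by
    simpa using f.le_of_opNorm_le_of_le hf (Q.le_of_opNorm_le_of_le le_rfl hx)

lemma ContinuousLinearMap.opNorm_le_of_forall_closedBall_apply_le {g : E →L[ℝ] ℝ} {c : ℝ}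
    (h : ∀ x ∈ closedBall (0 : E) 1, g x ≤ c) : ‖g‖ ≤ c := by
  have hc : 0 ≤ c := by simpa using h 0 (by simp)
  refine g.opNorm_le_of_unit_norm hc fun x hx => abs_le.2 ⟨?_, h x (by simp [hx])⟩
  exact neg_le.1 (by simpa using h (-x) (by simp [hx]))

lemma ContinuousLinearMap.exists_norm_le_one_norm_apply_eq [FiniteDimensional ℝ E]
    (Q : E →L[ℝ] F) : ∃ x, ‖x‖ ≤ 1 ∧ ‖Q x‖ = ‖Q‖ := by
  obtain ⟨x, hx, hmax⟩ := (isCompact_closedBall (0 : E) 1).exists_isMaxOn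
    ⟨0, by simp⟩ (Q.continuous.norm.continuousOn)
  rw [mem_closedBall_zero_iff] at hx
  refine ⟨x, hx, le_antisymm (by simpa using Q.le_opNorm_of_le hx) ?_⟩
  exact Q.opNorm_le_of_unit_norm (norm_nonneg _) fun z hz =>
    hmax (mem_closedBall_zero_iff.2 hz.le)

lemma ContinuousLinearMap.exists_mem_extremePoints_apply_eq_opNorm [FiniteDimensional ℝ E]
    (g : E →L[ℝ] ℝ) : ∃ x ∈ (closedBall (0 : E) 1).extremePoints ℝ, g x = ‖g‖ := by
  obtain ⟨x, hx, hmax⟩ := (isCompact_closedBall (0 : E) 1).exists_mem_extremePoints_isMaxOn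
    ⟨0, by simp⟩ g
  have hx1 : ‖x‖ ≤ 1 := mem_closedBall_zero_iff.1 (extremePoints_subset hx)
  exact ⟨x, hx, le_antisymm (g.apply_le_opNorm_of_norm_le_one hx1)
    (g.opNorm_le_of_forall_closedBall_apply_le fun y hy => hmax hy)⟩

lemma exists_mem_extremePoints_dual_apply_eq_norm [FiniteDimensional ℝ E] (y : E) :
    ∃ f ∈ (closedBall (0 : E →L[ℝ] ℝ) 1).extremePoints ℝ, f y = ‖y‖ := by
  have hnorm : ‖NormedSpace.inclusionInDoubleDual ℝ E y‖ = ‖y‖ :=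
    (NormedSpace.inclusionInDoubleDualLi ℝ).norm_map y
  simpa [hnorm] using
    (NormedSpace.inclusionInDoubleDual ℝ E y).exists_mem_extremePoints_apply_eq_opNorm

def normingPairs (Q : E →L[ℝ] F) : Set (E × (F →L[ℝ] ℝ)) :=
  {p | p.1 ∈ (closedBall (0 : E) 1).extremePoints ℝ ∧
    p.2 ∈ (closedBall (0 : F →L[ℝ] ℝ) 1).extremePoints ℝ ∧ p.2 (Q p.1) = ‖Q‖}

lemma normingPairs_nonempty [FiniteDimensional ℝ E] [FiniteDimensional ℝ F] (Q : E →L[ℝ] F) :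
    (normingPairs Q).Nonempty := by
  obtain ⟨x₀, hx₀, hQx₀⟩ := Q.exists_norm_le_one_norm_apply_eq
  obtain ⟨f, hf, hfQx₀⟩ := exists_mem_extremePoints_dual_apply_eq_norm (Q x₀)
  have hf1 : ‖f‖ ≤ 1 := mem_closedBall_zero_iff.1 (extremePoints_subset hf)
  obtain ⟨x, hx, hfQx⟩ := (f.comp Q).exists_mem_extremePoints_apply_eq_opNorm
  have hnorm : ‖f.comp Q‖ = ‖Q‖ := by
    refine le_antisymm ((f.opNorm_comp_le Q).trans (mul_le_of_le_one_left (norm_nonneg Q) hf1)) ?_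
    simpa [hfQx₀, hQx₀] using (f.comp Q).apply_le_opNorm_of_norm_le_one hx₀
  exact ⟨(x, f), hx, hf, by simpa [hnorm] using hfQx⟩

end NormedSpace

section Polyhedral

variable {s : Finset X}

lemma finite_extremePoints_closedBall_of_eq_convexHull
    (hs : closedBall (0 : X) 1 = convexHull ℝ (s : Set X)) :
    ((closedBall (0 : X) 1).extremePoints ℝ).Finite :=
  s.finite_toSet.subset (hs ▸ extremePoints_convexHull_subset)

lemma norm_le_one_iff_forall_apply_le_one_of_eq_convexHull
    (hs : closedBall (0 : X) 1 = convexHull ℝ (s : Set X)) (f : X →L[ℝ] ℝ) :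
    ‖f‖ ≤ 1 ↔ ∀ x ∈ s, f x ≤ 1 := by
  refine ⟨fun hf x hx => ?_, fun h => f.opNorm_le_of_forall_closedBall_apply_le ?_⟩
  · have hx1 : ‖x‖ ≤ 1 := by
      simpa using hs.symm.subset (subset_convexHull ℝ (s : Set X) hx)
    exact (f.apply_le_opNorm_of_norm_le_one hx1).trans hf
  · rw [hs]
    exact convexHull_min h (convex_halfSpace_le f.toLinearMap.isLinear 1)

lemma eq_of_mem_extremePoints_dual_of_eq_convexHull
    (hs : closedBall (0 : X) 1 = convexHull ℝ (s : Set X))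
    {f : X →L[ℝ] ℝ} (hf : f ∈ (closedBall (0 : X →L[ℝ] ℝ) 1).extremePoints ℝ)
    {g : X →L[ℝ] ℝ} (hg : ∀ x ∈ s, f x = 1 → g x = 1) : g = f := by
  have hball := norm_le_one_iff_forall_apply_le_one_of_eq_convexHull hs
  obtain ⟨ε, hε, hslack⟩ := s.exists_pos_forall_add_mul_le_and_sub_mul_le (fun x => f x)
    (fun x => (g - f) x) ((hball f).1 (mem_closedBall_zero_iff.1 (extremePoints_subset hf)))
    (fun x hx hfx => by simp [hfx, hg x hx hfx])
  have hmove : ε • (g - f) = 0 := by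
    refine eq_zero_of_add_mem_of_sub_mem hf ?_ ?_ <;> rw [mem_closedBall_zero_iff, hball]
    · exact fun x hx => by simpa using (hslack x hx).1
    · exact fun x hx => by simpa using (hslack x hx).2
  exact sub_eq_zero.1 ((smul_eq_zero.1 hmove).resolve_left hε.ne')

lemma finite_extremePoints_dual_of_eq_convexHull
    (hs : closedBall (0 : X) 1 = convexHull ℝ (s : Set X)) :
    ((closedBall (0 : X →L[ℝ] ℝ) 1).extremePoints ℝ).Finite := by
  classical
  refine Set.Finite.of_finite_image (f := fun f : X →L[ℝ] ℝ => s.filter (f · = 1))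
    (s.powerset.finite_toSet.subset ?_) fun f hf g _ (hfg : s.filter _ = s.filter _) => ?_
  · rintro _ ⟨f, -, rfl⟩
    exact Finset.mem_powerset.2 (Finset.filter_subset _ s)
  · refine (eq_of_mem_extremePoints_dual_of_eq_convexHull hs hf fun x hx hfx => ?_).symm
    have hx' : x ∈ s.filter (f · = 1) := Finset.mem_filter.2 ⟨hx, hfx⟩
    rw [hfg] at hx'
    exact (Finset.mem_filter.1 hx').2

end Polyhedral

section MinimalProjections

variable {Y : Submodule ℝ X}

lemma relProjConst_le {P : X →L[ℝ] X} (hP : IsProjOnto Y P) : relProjConst Y ≤ ‖P‖ :=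
  csInf_le ⟨0, by rintro _ ⟨Q, -, rfl⟩; exact norm_nonneg Q⟩ ⟨P, hP, rfl⟩

lemma IsProjOnto.add_smul {P L : X →L[ℝ] X} (hP : IsProjOnto Y P) (hLY : ∀ x, L x ∈ Y)
    (hL : ∀ y ∈ Y, L y = 0) (t : ℝ) : IsProjOnto Y (P + t • L) :=
  ⟨fun x => Y.add_mem (hP.1 x) (Y.smul_mem t (hLY x)), fun y hy => by simp [hP.2 y hy, hL y hy]⟩

lemma isClosed_setOf_isProjOnto (hY : IsClosed (Y : Set X)) :
    IsClosed {P : X →L[ℝ] X | IsProjOnto Y P} := by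
  simp only [IsProjOnto, ofPred_and, ofPred_forall]
  exact (isClosed_iInter fun x => hY.preimage (ContinuousLinearMap.apply ℝ X x).continuous).inter
    (isClosed_iInter fun y => isClosed_iInter fun _ =>
      isClosed_eq (ContinuousLinearMap.apply ℝ X y).continuous continuous_const)

lemma exists_isProjOnto [FiniteDimensional ℝ Y] : ∃ P : X →L[ℝ] X, IsProjOnto Y P := by
  obtain ⟨f, hf⟩ := Submodule.ClosedComplemented.of_finiteDimensional Y
  exact ⟨Y.subtypeL.comp f, fun x => (f x).2, fun y hy => congrArg Subtype.val (hf ⟨y, hy⟩)⟩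

lemma minProjSet_nonempty [FiniteDimensional ℝ X] (Y : Submodule ℝ X) :
    (MinProjSet Y).Nonempty := by
  obtain ⟨P₀, hP₀⟩ := exists_isProjOnto (Y := Y)
  obtain ⟨P, hP, hdist⟩ := (isClosed_setOf_isProjOnto Y.closed_of_finiteDimensional)
    |>.exists_infDist_eq_dist ⟨P₀, hP₀⟩ 0
  have hmin : ∀ Q : X →L[ℝ] X, IsProjOnto Y Q → ‖P‖ ≤ ‖Q‖ := fun Q hQ => by
    simpa [hdist] using infDist_le_dist_of_mem (x := 0) (show Q ∈ {P | IsProjOnto Y P} from hQ)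
  exact ⟨P, hP, le_antisymm (le_csInf ⟨_, P, hP, rfl⟩ (by rintro _ ⟨Q, hQ, rfl⟩; exact hmin Q hQ))
    (relProjConst_le hP)⟩

lemma isCompact_minProjSet [FiniteDimensional ℝ X] (Y : Submodule ℝ X) :
    IsCompact (MinProjSet Y) := by
  refine (isCompact_closedBall (0 : X →L[ℝ] X) (relProjConst Y)).of_isClosed_subset ?_
    fun P hP => mem_closedBall_zero_iff.2 hP.2.le
  exact (isClosed_setOf_isProjOnto Y.closed_of_finiteDimensional).inter
    (isClosed_eq continuous_norm continuous_const)

end MinimalProjections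

section ExtremeMinimalProjections

variable [FiniteDimensional ℝ X] {Y : Submodule ℝ X}

theorem eq_zero_of_forall_normingPairs_apply_eq
    (hfin : ((closedBall (0 : X) 1).extremePoints ℝ ×ˢ
      (closedBall (0 : X →L[ℝ] ℝ) 1).extremePoints ℝ).Finite)
    {P : X →L[ℝ] X} (hP : P ∈ (MinProjSet Y).extremePoints ℝ) {L : X →L[ℝ] X}
    (hLY : ∀ x, L x ∈ Y) (hL : ∀ y ∈ Y, L y = 0) {τ : ℝ}
    (hτ : ∀ p ∈ normingPairs P, p.2 (L p.1) = τ) : L = 0 ∧ τ = 0 := by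
  obtain ⟨hPproj, hPmin⟩ := hP.1
  obtain ⟨ε, hε, hslack⟩ := hfin.toFinset.exists_pos_forall_add_mul_le_and_sub_mul_le
    (fun p => p.2 (P p.1)) (fun p => p.2 (L p.1) - τ) (c := ‖P‖)
    (fun p hp => by
      obtain ⟨hx, hf⟩ := hfin.mem_toFinset.1 hp
      exact P.apply_apply_le_opNorm (mem_closedBall_zero_iff.1 (extremePoints_subset hx))
        (mem_closedBall_zero_iff.1 (extremePoints_subset hf)))
    (fun p hp hpP => by
      obtain ⟨hx, hf⟩ := hfin.mem_toFinset.1 hp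
      simp [hτ p ⟨hx, hf, hpP⟩])
  have hnorm : ∀ t : ℝ, (∀ p ∈ hfin.toFinset, p.2 (P p.1) + t * (p.2 (L p.1) - τ) ≤ ‖P‖) →
      ‖P + t • L‖ ≤ ‖P‖ + t * τ := fun t ht => by
    obtain ⟨p, hx, hf, hp⟩ := normingPairs_nonempty (P + t • L)
    have := ht p (hfin.mem_toFinset.2 ⟨hx, hf⟩)
    simp only [add_apply, smul_apply, map_add, map_smul, smul_eq_mul] at hp
    linarith
  have hplus := hnorm ε fun p hp => (hslack p hp).1
  have hminus := hnorm (-ε) fun p hp => by simpa [sub_eq_add_neg] using (hslack p hp).2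
  have hlow : ∀ t : ℝ, ‖P‖ ≤ ‖P + t • L‖ := fun t =>
    hPmin ▸ relProjConst_le (hPproj.add_smul hLY hL t)
  have hτ0 : τ = 0 := by nlinarith [hlow ε, hlow (-ε)]
  have hmin : ∀ t, ‖P + t • L‖ ≤ ‖P‖ + t * τ → P + t • L ∈ MinProjSet Y := fun t ht =>
    ⟨hPproj.add_smul hLY hL t, le_antisymm (by simpa [hτ0, hPmin] using ht) (hPmin ▸ hlow t)⟩
  have hεL : ε • L = 0 := eq_zero_of_add_mem_of_sub_mem hP (hmin ε hplus)
    (by simpa [sub_eq_add_neg] using hmin (-ε) hminus)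
  exact ⟨(smul_eq_zero.1 hεL).resolve_left hε.ne', hτ0⟩

theorem finrank_add_one_le_card_normingPairs
    (hfin : ((closedBall (0 : X) 1).extremePoints ℝ ×ˢ
      (closedBall (0 : X →L[ℝ] ℝ) 1).extremePoints ℝ).Finite)
    {P : X →L[ℝ] X} (hP : P ∈ (MinProjSet Y).extremePoints ℝ) {s : Finset (X × (X →L[ℝ] ℝ))}
    (hs : (s : Set _) = normingPairs P) :
    finrank ℝ ((X ⧸ Y) →ₗ[ℝ] Y) + 1 ≤ s.card := by
  let Θ : ((X ⧸ Y) →ₗ[ℝ] Y) × ℝ →ₗ[ℝ] (s → ℝ) :=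
    { toFun := fun vτ p => p.1.2 (vτ.1 (Y.mkQ p.1.1)) - vτ.2
      map_add' := fun _ _ => by ext; simp; ring
      map_smul' := fun _ _ => by ext; simp; ring }
  have hΘ : Function.Injective Θ := by
    refine (injective_iff_map_eq_zero Θ).2 fun ⟨v, τ⟩ hvτ => ?_
    set L : X →L[ℝ] X := LinearMap.toContinuousLinearMap (Y.subtype ∘ₗ v ∘ₗ Y.mkQ)
    obtain ⟨hL, hτ⟩ := eq_zero_of_forall_normingPairs_apply_eq hfin hP (L := L) (τ := τ)
      (fun x => (v (Y.mkQ x)).2) (fun y hy => by simp [L, (Submodule.Quotient.mk_eq_zero Y).2 hy])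
      (fun p hp => sub_eq_zero.1 (congrFun hvτ ⟨p, by rwa [← Finset.mem_coe, hs]⟩))
    have hv : v = 0 := by
      ext x
      simpa [L] using DFunLike.congr_fun hL x
    simp [hv, hτ]
  simpa [Module.finrank_prod] using LinearMap.finrank_le_finrank_of_injective hΘ

end ExtremeMinimalProjections

/-- In an `n`-dimensional polyhedral space, every `k`-dimensional subspace
(`1 ≤ k ≤ n-1`) admits a minimal projection with at least `n` norming pairs
`(x, f) ∈ ext B_X × ext B_{X*}`, `f (P x) = ‖P‖`. -/
theorem exists_minProj_with_many_norming_pairs [FiniteDimensional ℝ X]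
    (hpoly : IsPolyhedralSpace X) {n k : ℕ} (hn : finrank ℝ X = n)
    (Y : Submodule ℝ X) (hk : finrank ℝ Y = k) (hk1 : 1 ≤ k) (hkn : k ≤ n - 1) :
    ∃ P ∈ MinProjSet Y, ∃ s : Finset (X × (X →L[ℝ] ℝ)),
      n ≤ s.card ∧
      ∀ p ∈ s, p.1 ∈ Set.extremePoints ℝ (closedBall (0 : X) 1) ∧
        p.2 ∈ Set.extremePoints ℝ (closedBall (0 : X →L[ℝ] ℝ) 1) ∧
        p.2 (P p.1) = ‖P‖ := by
  obtain ⟨s, hs⟩ := hpoly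
  have hfin := (finite_extremePoints_closedBall_of_eq_convexHull hs).prod
    (finite_extremePoints_dual_of_eq_convexHull hs)
  obtain ⟨P, hP⟩ := (isCompact_minProjSet Y).extremePoints_nonempty (minProjSet_nonempty Y)
  have hnorming : (normingPairs P).Finite :=
    hfin.subset fun p hp => ⟨hp.1, hp.2.1⟩
  refine ⟨P, hP.1, hnorming.toFinset, ?_, fun p hp => hnorming.mem_toFinset.1 hp⟩
  have hcard := finrank_add_one_le_card_normingPairs hfin hP hnorming.coe_toFinset
  rw [Module.finrank_linearMap, Submodule.finrank_quotient, hn, hk] at hcard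
  obtain ⟨m, rfl⟩ : ∃ m, n = k + 1 + m := ⟨n - k - 1, by omega⟩
  have hdim : k + 1 + m - k = m + 1 := by omega
  rw [hdim] at hcard
  nlinarith
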